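/- arXiv:1706.04095 — 2 statements merged into one kernel-verified Lean document; each statement's English description precedes it below -/
import Mathlib

section
/- For any category C equipped with a flow (T, u, μ), the interleaving distance d_(C,T) is an extended pseudometric on the objects of C: for all objects a, b, c one has d_(C,T)(a,a) = 0, d_(C,T)(a,b) = d_(C,T)(b,a), and d_(C,T)(a,c) ≤ d_(C,T)(a,b) + d_(C,T)(b,c), where the values are taken in [0,∞]. -/
open CategoryTheory
open scoped NNReal ENNReal

universe v u

/-- A flow on a category `C`: a lax monoidal action of `([0,∞), ≤, +)` on `C`. -/
structure CatFlow (C : Type u) [Category.{v} C] where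
  /-- the `ε`-translation endofunctors -/
  T : ℝ≥0 → C ⥤ C
  /-- the natural transformations `T ε ⟶ T ζ` for `ε ≤ ζ` -/
  Tle : ∀ {ε ζ : ℝ≥0}, ε ≤ ζ → (T ε ⟶ T ζ)
  Tle_refl : ∀ ε : ℝ≥0, Tle (le_refl ε) = 𝟙 (T ε)
  Tle_trans : ∀ {ε ζ δ : ℝ≥0} (h₁ : ε ≤ ζ) (h₂ : ζ ≤ δ), Tle h₁ ≫ Tle h₂ = Tle (h₁.trans h₂)
  /-- the unit coherence natural transformation `𝟭 C ⟶ T 0` -/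
  u : 𝟭 C ⟶ T 0
  /-- the multiplication coherence transformations; note `(T ζ ⋙ T ε).obj a = (T ε).obj ((T ζ).obj a)`,
  which is the composite `T_ε ∘ T_ζ` of the paper. -/
  μ : ∀ ε ζ : ℝ≥0, T ζ ⋙ T ε ⟶ T (ε + ζ)
  unit_left : ∀ (ε : ℝ≥0) (a : C),
    u.app ((T ε).obj a) ≫ (μ 0 ε).app a = eqToHom (by simp)
  unit_right : ∀ (ε : ℝ≥0) (a : C),
    (T ε).map (u.app a) ≫ (μ ε 0).app a = eqToHom (by simp)
  assoc : ∀ (ε ζ δ : ℝ≥0) (a : C),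
    (μ ε ζ).app ((T δ).obj a) ≫ (μ (ε + ζ) δ).app a
      = (T ε).map ((μ ζ δ).app a) ≫ (μ ε (ζ + δ)).app a ≫ eqToHom (by rw [add_assoc])
  compat : ∀ {ε ζ δ κ : ℝ≥0} (h₁ : ε ≤ δ) (h₂ : ζ ≤ κ) (a : C),
    (μ ε ζ).app a ≫ (Tle (add_le_add h₁ h₂)).app a
      = (T ε).map ((Tle h₂).app a) ≫ (Tle h₁).app ((T κ).obj a) ≫ (μ δ κ).app a

/-- `(φ, ψ)` is a weak `ε`-interleaving of `a` and `b`. -/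
structure IsWeakInterleaving {C : Type u} [Category.{v} C] (F : CatFlow C) (ε : ℝ≥0)
    (a b : C) (φ : a ⟶ (F.T ε).obj b) (ψ : b ⟶ (F.T ε).obj a) : Prop where
  left : φ ≫ (F.T ε).map ψ ≫ (F.μ ε ε).app a
      = F.u.app a ≫ (F.Tle (zero_le : (0 : ℝ≥0) ≤ ε + ε)).app a
  right : ψ ≫ (F.T ε).map φ ≫ (F.μ ε ε).app b
      = F.u.app b ≫ (F.Tle (zero_le : (0 : ℝ≥0) ≤ ε + ε)).app b

/-- `a` and `b` are weakly `ε`-interleaved. -/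
def WeaklyInterleaved {C : Type u} [Category.{v} C] (F : CatFlow C) (ε : ℝ≥0) (a b : C) : Prop :=
  ∃ φ ψ, IsWeakInterleaving F ε a b φ ψ

/-- The interleaving distance associated to a flow. -/
noncomputable def interleavingDist {C : Type u} [Category.{v} C] (F : CatFlow C) (a b : C) :
    ℝ≥0∞ :=
  sInf { x : ℝ≥0∞ | ∃ ε : ℝ≥0, x = ε ∧ WeaklyInterleaved F ε a b }

/-!
Kleisli composition `f ⊙ g := f ≫ T_ε g ≫ μ_{ε,ζ}` of morphisms `a ⟶ T_ε b` and `b ⟶ T_ζ c` is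
associative and unital (with unit `u`) up to the relaxations `T_(ε≤ζ)`, and commutes with them by
the compatibility axiom. A weak `ε`-interleaving says that `φ ⊙ ψ` and `ψ ⊙ φ` are relaxed units,
so `u` is a `0`-interleaving of `a` with itself, and interleavings compose like isomorphisms:
`(φ₁ ⊙ φ₂) ⊙ (ψ₂ ⊙ ψ₁) = φ₁ ⊙ ((φ₂ ⊙ ψ₂) ⊙ ψ₁) = φ₁ ⊙ ψ₁` up to relaxation. An `ε`- and a
`ζ`-interleaving thus give an `(ε + ζ)`-interleaving, which is the triangle inequality.
-/

namespace CatFlow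

variable {C : Type u} [Category.{v} C] (F : CatFlow C)

def kleisliComp {ε ζ : ℝ≥0} {a b c : C} (f : a ⟶ (F.T ε).obj b) (g : b ⟶ (F.T ζ).obj c) :
    a ⟶ (F.T (ε + ζ)).obj c :=
  f ≫ (F.T ε).map g ≫ (F.μ ε ζ).app c

variable {F}

lemma Tle_app_comp {ε ζ δ : ℝ≥0} (h₁ : ε ≤ ζ) (h₂ : ζ ≤ δ) (a : C) :
    (F.Tle h₁).app a ≫ (F.Tle h₂).app a = (F.Tle (h₁.trans h₂)).app a := by
  rw [← NatTrans.comp_app, F.Tle_trans]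

lemma eqToHom_eq_Tle_app {ε ζ : ℝ≥0} (h : ε = ζ) (a : C) :
    eqToHom (congrArg (fun x ↦ (F.T x).obj a) h) = (F.Tle h.le).app a := by
  subst h
  simp [F.Tle_refl]

lemma kleisliComp_Tle_left {ε ε' ζ : ℝ≥0} {a b c : C} (f : a ⟶ (F.T ε).obj b)
    (g : b ⟶ (F.T ζ).obj c) (h : ε ≤ ε') :
    F.kleisliComp (f ≫ (F.Tle h).app b) g
      = F.kleisliComp f g ≫ (F.Tle (add_le_add_left h ζ)).app c := by
  have hμ := F.compat h (le_refl ζ) c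
  rw [F.Tle_refl, NatTrans.id_app, CategoryTheory.Functor.map_id, Category.id_comp] at hμ
  simp only [kleisliComp, Category.assoc, hμ]
  rw [← reassoc_of% ((F.Tle h).naturality g)]

lemma kleisliComp_Tle_right {ε ζ ζ' : ℝ≥0} {a b c : C} (f : a ⟶ (F.T ε).obj b)
    (g : b ⟶ (F.T ζ).obj c) (h : ζ ≤ ζ') :
    F.kleisliComp f (g ≫ (F.Tle h).app c)
      = F.kleisliComp f g ≫ (F.Tle (add_le_add_right h ε)).app c := by
  have hμ := F.compat (le_refl ε) h c
  rw [F.Tle_refl, NatTrans.id_app, Category.id_comp] at hμ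
  simp only [kleisliComp, Category.assoc, Functor.map_comp, hμ]

lemma kleisliComp_assoc {ε ζ δ : ℝ≥0} {a b c d : C} (f : a ⟶ (F.T ε).obj b)
    (g : b ⟶ (F.T ζ).obj c) (k : c ⟶ (F.T δ).obj d) :
    F.kleisliComp (F.kleisliComp f g) k
      = F.kleisliComp f (F.kleisliComp g k) ≫ (F.Tle (add_assoc ε ζ δ).ge).app d := by
  have hμ := F.assoc ε ζ δ d
  rw [eqToHom_eq_Tle_app (add_assoc ε ζ δ).symm d] at hμ
  have hnat := (F.μ ε ζ).naturality k
  simp only [Functor.comp_map] at hnat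
  simp only [kleisliComp, Category.assoc, Functor.map_comp]
  rw [← reassoc_of% hnat, hμ]

lemma u_kleisliComp {ε : ℝ≥0} {a b : C} (f : a ⟶ (F.T ε).obj b) :
    F.kleisliComp (F.u.app a) f = f ≫ (F.Tle (zero_add ε).ge).app b := by
  have hnat := F.u.naturality f
  simp only [Functor.id_map] at hnat
  rw [kleisliComp, ← reassoc_of% hnat, F.unit_left, eqToHom_eq_Tle_app (zero_add ε).symm]

lemma kleisliComp_kleisliComp_eq_u_Tle {ε ζ δ : ℝ≥0} {a b c : C}
    {φ₁ : a ⟶ (F.T ε).obj b} {ψ₁ : b ⟶ (F.T ε).obj a}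
    {φ₂ : b ⟶ (F.T ζ).obj c} {ψ₂ : c ⟶ (F.T ζ).obj b}
    (H₁ : F.kleisliComp φ₁ ψ₁ = F.u.app a ≫ (F.Tle (zero_le : 0 ≤ ε + ε)).app a)
    (H₂ : F.kleisliComp φ₂ ψ₂ = F.u.app b ≫ (F.Tle (zero_le : 0 ≤ ζ + ζ)).app b)
    (h₁ : ε + ζ ≤ δ) (h₂ : ζ + ε ≤ δ) :
    F.kleisliComp (F.kleisliComp φ₁ φ₂ ≫ (F.Tle h₁).app c)
        (F.kleisliComp ψ₂ ψ₁ ≫ (F.Tle h₂).app a)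
      = F.u.app a ≫ (F.Tle (zero_le : 0 ≤ δ + δ)).app a := by
  have hle : ε + ((ζ + ζ) + ε) ≤ δ + δ := by grind
  have inner : F.kleisliComp φ₂ (F.kleisliComp ψ₂ ψ₁) ≫ (F.Tle (add_assoc ζ ζ ε).ge).app a
      = ψ₁ ≫ (F.Tle (le_add_self : ε ≤ (ζ + ζ) + ε)).app a := by
    rw [← kleisliComp_assoc, H₂, kleisliComp_Tle_left, u_kleisliComp, Category.assoc,
      Tle_app_comp]
  calc F.kleisliComp (F.kleisliComp φ₁ φ₂ ≫ (F.Tle h₁).app c)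
        (F.kleisliComp ψ₂ ψ₁ ≫ (F.Tle h₂).app a)
      = F.kleisliComp (F.kleisliComp φ₁ φ₂) (F.kleisliComp ψ₂ ψ₁) ≫
          (F.Tle (add_le_add h₁ h₂)).app a := by
        rw [kleisliComp_Tle_left, kleisliComp_Tle_right, Category.assoc, Tle_app_comp]
    _ = F.kleisliComp φ₁ (F.kleisliComp φ₂ (F.kleisliComp ψ₂ ψ₁) ≫
          (F.Tle (add_assoc ζ ζ ε).ge).app a) ≫ (F.Tle hle).app a := by
        rw [kleisliComp_assoc, kleisliComp_Tle_right, Category.assoc, Category.assoc,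
          Tle_app_comp, Tle_app_comp]
    _ = F.u.app a ≫ (F.Tle (zero_le : 0 ≤ δ + δ)).app a := by
        rw [inner, kleisliComp_Tle_right, H₁, Category.assoc, Category.assoc, Tle_app_comp,
          Tle_app_comp]

end CatFlow

section

variable {C : Type u} [Category.{v} C] {F : CatFlow C}

lemma IsWeakInterleaving.symm {ε : ℝ≥0} {a b : C} {φ : a ⟶ (F.T ε).obj b}
    {ψ : b ⟶ (F.T ε).obj a} (h : IsWeakInterleaving F ε a b φ ψ) :
    IsWeakInterleaving F ε b a ψ φ :=
  ⟨h.right, h.left⟩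

lemma isWeakInterleaving_u_u (a : C) : IsWeakInterleaving F 0 a a (F.u.app a) (F.u.app a) :=
  ⟨F.u_kleisliComp _, F.u_kleisliComp _⟩

lemma IsWeakInterleaving.trans {ε ζ : ℝ≥0} {a b c : C}
    {φ₁ : a ⟶ (F.T ε).obj b} {ψ₁ : b ⟶ (F.T ε).obj a}
    {φ₂ : b ⟶ (F.T ζ).obj c} {ψ₂ : c ⟶ (F.T ζ).obj b}
    (h₁ : IsWeakInterleaving F ε a b φ₁ ψ₁) (h₂ : IsWeakInterleaving F ζ b c φ₂ ψ₂) :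
    IsWeakInterleaving F (ε + ζ) a c (F.kleisliComp φ₁ φ₂ ≫ (F.Tle le_rfl).app c)
      (F.kleisliComp ψ₂ ψ₁ ≫ (F.Tle (add_comm ζ ε).le).app a) :=
  ⟨CatFlow.kleisliComp_kleisliComp_eq_u_Tle h₁.left h₂.left _ _,
    CatFlow.kleisliComp_kleisliComp_eq_u_Tle h₂.right h₁.right _ _⟩

lemma WeaklyInterleaved.symm {ε : ℝ≥0} {a b : C} (h : WeaklyInterleaved F ε a b) :
    WeaklyInterleaved F ε b a :=
  let ⟨φ, ψ, h⟩ := h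
  ⟨ψ, φ, h.symm⟩

lemma WeaklyInterleaved.trans {ε ζ : ℝ≥0} {a b c : C} (hab : WeaklyInterleaved F ε a b)
    (hbc : WeaklyInterleaved F ζ b c) : WeaklyInterleaved F (ε + ζ) a c :=
  let ⟨_, _, hab⟩ := hab
  let ⟨_, _, hbc⟩ := hbc
  ⟨_, _, hab.trans hbc⟩

lemma interleavingDist_eq_iInf (a b : C) :
    interleavingDist F a b = ⨅ (ε : ℝ≥0) (_ : WeaklyInterleaved F ε a b), (ε : ℝ≥0∞) := by
  have hset : {x : ℝ≥0∞ | ∃ ε : ℝ≥0, x = ε ∧ WeaklyInterleaved F ε a b}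
      = ((↑) : ℝ≥0 → ℝ≥0∞) '' {ε | WeaklyInterleaved F ε a b} := by
    ext
    simp only [Set.mem_ofPred_eq, Set.mem_image, and_comm, eq_comm]
  exact (congrArg sInf hset).trans sInf_image

lemma interleavingDist_le {ε : ℝ≥0} {a b : C} (h : WeaklyInterleaved F ε a b) :
    interleavingDist F a b ≤ ε :=
  sInf_le ⟨ε, rfl, h⟩

lemma interleavingDist_self (a : C) : interleavingDist F a a = 0 :=
  nonpos_iff_eq_zero.mp (interleavingDist_le ⟨_, _, isWeakInterleaving_u_u a⟩)

lemma interleavingDist_comm (a b : C) : interleavingDist F a b = interleavingDist F b a := by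
  simp only [interleavingDist_eq_iInf]
  exact iInf_congr fun ε ↦ iInf_congr_Prop ⟨.symm, .symm⟩ fun _ ↦ rfl

lemma interleavingDist_triangle (a b c : C) :
    interleavingDist F a c ≤ interleavingDist F a b + interleavingDist F b c := by
  simp only [interleavingDist_eq_iInf, ENNReal.iInf_add, ENNReal.add_iInf]
  refine le_iInf₂ fun ζ hbc ↦ le_iInf₂ fun ε hab ↦ ?_
  exact (iInf₂_le (ε + ζ) (hab.trans hbc)).trans (by rw [ENNReal.coe_add, add_comm])

end

/-- The interleaving distance of a category with a flow is an extended pseudometric on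
the objects: reflexivity, symmetry and the triangle inequality hold, with values in `[0,∞]`. -/
theorem interleavingDist_pseudometric {C : Type u} [Category.{v} C] (F : CatFlow C)
    (a b c : C) :
    interleavingDist F a a = 0 ∧
    interleavingDist F a b = interleavingDist F b a ∧
    interleavingDist F a c ≤ interleavingDist F a b + interleavingDist F b c := by
  exact ⟨interleavingDist_self a, interleavingDist_comm a b, interleavingDist_triangle a b c⟩
end

section
/- Let (M,d) be a metric space, X and Y topological spaces, f : X → M and g : Y → M continuous, ε ≥ 0, and suppose Φ : X → Y is a homeomorphism with d(f(x), g(Φ(x))) ≤ ε for all x ∈ X. Let L_f and L_g be the level set filtration functors from the poset of subsets of M (ordered by inclusion) to Top, U ↦ f⁻¹(U) and U ↦ g⁻¹(U), and let H : Top ⥤ D be any functor into any category D (for example a homology functor into vector spaces). Then H∘L_f and H∘L_g are Ω_ε-interleaved for the superlinear family Ω_ε(U) = closed ε-thickening of U. Consequently d_Ω(H∘L_f, H∘L_g) ≤ sup_{x∈X} d(f(x), g(Φ(x))) whenever such a homeomorphism exists (soft stability of level set persistence). -/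
/-!
Restricting `Φ` to level sets maps `f⁻¹ U` into `g⁻¹ (U^ε)`, and `Φ⁻¹` maps `g⁻¹ U` into
`f⁻¹ (U^ε)`. These restrictions are natural in `U` and compose to inclusions because
`Φ⁻¹ ∘ Φ = id`, so they interleave the level filtrations already in `Top`; any functor `H` preserves this.
Running the argument with `ε = sup_x d(f x, g (Φ x))` gives the distance bound.
-/

open CategoryTheory
open scoped NNReal ENNReal

universe v u

universe v₂ u₂

/-- A superlinear family of translations on a preorder `P`. -/
structure SuperlinearFamily (P : Type u) [Preorder P] where
  /-- the underlying translation maps -/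
  Ω : ℝ≥0 → P → P
  mono : ∀ ε : ℝ≥0, Monotone (Ω ε)
  le_self : ∀ (ε : ℝ≥0) (p : P), p ≤ Ω ε p
  mono_eps : ∀ {ε ζ : ℝ≥0}, ε ≤ ζ → ∀ p : P, Ω ε p ≤ Ω ζ p
  superlinear : ∀ (ε ζ : ℝ≥0) (p : P), Ω ε (Ω ζ p) ≤ Ω (ε + ζ) p

/-- An `Ω_ε`-interleaving of generalized persistence modules `F, G : P ⥤ D`
(Bubenik–de Silva–Scott style). -/
structure OmegaInterleaving {P : Type u} [Preorder P] {D : Type u₂} [Category.{v₂} D]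
    (S : SuperlinearFamily P) (ε : ℝ≥0) (F G : P ⥤ D) where
  φ : F ⟶ (S.mono ε).functor ⋙ G
  ψ : G ⟶ (S.mono ε).functor ⋙ F
  left : ∀ p : P, φ.app p ≫ ψ.app (S.Ω ε p)
      = F.map (homOfLE ((S.le_self ε p).trans (S.le_self ε (S.Ω ε p))))
  right : ∀ p : P, ψ.app p ≫ φ.app (S.Ω ε p)
      = G.map (homOfLE ((S.le_self ε p).trans (S.le_self ε (S.Ω ε p))))

/-- `F` and `G` are `Ω_ε`-interleaved. -/
def OmegaInterleaved {P : Type u} [Preorder P] {D : Type u₂} [Category.{v₂} D]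
    (S : SuperlinearFamily P) (ε : ℝ≥0) (F G : P ⥤ D) : Prop :=
  Nonempty (OmegaInterleaving S ε F G)

/-- The interleaving distance `d_Ω` of generalized persistence modules. -/
noncomputable def dOmega {P : Type u} [Preorder P] {D : Type u₂} [Category.{v₂} D]
    (S : SuperlinearFamily P) (F G : P ⥤ D) : ℝ≥0∞ :=
  sInf { x : ℝ≥0∞ | ∃ ε : ℝ≥0, x = ε ∧ OmegaInterleaved S ε F G }

/-- The closed-thickening superlinear family `U ↦ {m : infEdist m U ≤ ε}` on the poset of
subsets of a metric space `M` ordered by inclusion. -/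
noncomputable def thickeningFamily (M : Type) [MetricSpace M] :
    SuperlinearFamily (Set M) where
  Ω ε U := Metric.cthickening (ε : ℝ) U
  mono ε U V h := Metric.cthickening_subset_of_subset _ h
  le_self ε U := Metric.self_subset_cthickening U
  mono_eps h U := Metric.cthickening_mono (NNReal.coe_le_coe.2 h) U
  superlinear ε ζ U := by
    try dsimp only
    rw [NNReal.coe_add]
    exact Metric.cthickening_cthickening_subset ε.2 ζ.2 U

/-- The level set filtration of `f : X → M`, a functor from the poset of subsets of `M`
(ordered by inclusion) to `Top`, `U ↦ f ⁻¹' U`. -/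
def levelFiltration {X : Type} [TopologicalSpace X] {M : Type} [MetricSpace M]
    (f : X → M) : Set M ⥤ TopCat where
  obj U := TopCat.of (f ⁻¹' U)
  map {U V} h :=
    TopCat.ofHom ⟨Set.inclusion (Set.preimage_mono (leOfHom h)), continuous_inclusion _⟩

section LevelFiltration

variable {M : Type} [MetricSpace M] {X Y : Type} [TopologicalSpace X] [TopologicalSpace Y]
  {f : X → M} {g : Y → M} {ε : ℝ≥0}

def levelFiltrationHomOfDistLE (Φ : C(X, Y)) (hΦ : ∀ x, dist (f x) (g (Φ x)) ≤ ε) :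
    levelFiltration f ⟶ ((thickeningFamily M).mono ε).functor ⋙ levelFiltration g where
  app U := TopCat.ofHom
    ⟨fun x => ⟨Φ x.1, Metric.mem_cthickening_of_dist_le _ _ _ U x.2
        ((dist_comm _ _).trans_le (hΦ x.1))⟩,
      (Φ.continuous.comp continuous_subtype_val).subtype_mk _⟩
  naturality _ _ _ := rfl

theorem levelFiltrationHomOfDistLE_app_comp {Φ : C(X, Y)} {Ψ : C(Y, X)}
    (hΦ : ∀ x, dist (f x) (g (Φ x)) ≤ ε) (hΨ : ∀ y, dist (g y) (f (Ψ y)) ≤ ε)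
    (hΨΦ : Function.LeftInverse Ψ Φ) (U : Set M) :
    (levelFiltrationHomOfDistLE Φ hΦ).app U ≫
        (levelFiltrationHomOfDistLE Ψ hΨ).app ((thickeningFamily M).Ω ε U) =
      (levelFiltration f).map (homOfLE (((thickeningFamily M).le_self ε U).trans
        ((thickeningFamily M).le_self ε ((thickeningFamily M).Ω ε U)))) := by
  ext x
  exact Subtype.ext (hΨΦ x.1)

def levelFiltrationInterleavingOfHomeomorph (Φ : X ≃ₜ Y)
    (hΦ : ∀ x, dist (f x) (g (Φ x)) ≤ ε) :
    OmegaInterleaving (thickeningFamily M) ε (levelFiltration f) (levelFiltration g) :=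
  have hΦsymm : ∀ y, dist (g y) (f (Φ.symm y)) ≤ ε := fun y => by
    simpa [dist_comm] using hΦ (Φ.symm y)
  { φ := levelFiltrationHomOfDistLE (Φ : C(X, Y)) hΦ
    ψ := levelFiltrationHomOfDistLE (Φ.symm : C(Y, X)) hΦsymm
    left := levelFiltrationHomOfDistLE_app_comp hΦ hΦsymm Φ.symm_apply_apply
    right := levelFiltrationHomOfDistLE_app_comp hΦsymm hΦ Φ.apply_symm_apply }

end LevelFiltration

section Interleaving

variable {P : Type u} [Preorder P] {D : Type u₂} [Category.{v₂} D] {S : SuperlinearFamily P}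
  {ε : ℝ≥0} {F G : P ⥤ D}

def OmegaInterleaving.whiskerRight {E : Type*} [Category E] (I : OmegaInterleaving S ε F G)
    (H : D ⥤ E) : OmegaInterleaving S ε (F ⋙ H) (G ⋙ H) where
  φ := Functor.whiskerRight I.φ H
  ψ := Functor.whiskerRight I.ψ H
  left p := (H.map_comp _ _).symm.trans (congrArg H.map (I.left p))
  right p := (H.map_comp _ _).symm.trans (congrArg H.map (I.right p))

theorem OmegaInterleaved.dOmega_le (h : OmegaInterleaved S ε F G) : dOmega S F G ≤ ε :=
  sInf_le ⟨ε, rfl, h⟩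

end Interleaving

theorem ENNReal.exists_coe_eq_iSup_ofReal_of_le {ι : Type*} {d : ι → ℝ} {ε : ℝ≥0}
    (hd : ∀ i, d i ≤ ε) : ∃ δ : ℝ≥0, (δ : ℝ≥0∞) = ⨆ i, ENNReal.ofReal (d i) ∧ ∀ i, d i ≤ δ := by
  have hle : ⨆ i, ENNReal.ofReal (d i) ≤ ε :=
    iSup_le fun i => (ENNReal.ofReal_le_ofReal (hd i)).trans_eq ENNReal.ofReal_coe_nnreal
  have hne : ⨆ i, ENNReal.ofReal (d i) ≠ ⊤ := ne_top_of_le_ne_top ENNReal.coe_ne_top hle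
  refine ⟨(⨆ i, ENNReal.ofReal (d i)).toNNReal, ENNReal.coe_toNNReal hne, fun i => ?_⟩
  rw [ENNReal.coe_toNNReal_eq_toReal, ← ENNReal.ofReal_le_iff_le_toReal hne]
  exact le_iSup (fun i => ENNReal.ofReal (d i)) i

theorem level_persistence_soft_stability_general {M : Type} [MetricSpace M] {X Y : Type}
    [TopologicalSpace X] [TopologicalSpace Y] (f : X → M) (g : Y → M)
    {D : Type u₂} [Category.{v₂} D] (H : TopCat ⥤ D)
    (ε : ℝ≥0) (Φ : X ≃ₜ Y) (hΦ : ∀ x : X, dist (f x) (g (Φ x)) ≤ ε) :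
    OmegaInterleaved (thickeningFamily M) ε (levelFiltration f ⋙ H) (levelFiltration g ⋙ H) ∧
    dOmega (thickeningFamily M) (levelFiltration f ⋙ H) (levelFiltration g ⋙ H) ≤
      ⨆ x : X, ENNReal.ofReal (dist (f x) (g (Φ x))) := by
  have interleaved : ∀ δ : ℝ≥0, (∀ x, dist (f x) (g (Φ x)) ≤ δ) →
      OmegaInterleaved (thickeningFamily M) δ (levelFiltration f ⋙ H) (levelFiltration g ⋙ H) :=
    fun δ hδ => ⟨(levelFiltrationInterleavingOfHomeomorph Φ hδ).whiskerRight H⟩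
  obtain ⟨δ, hδ, hdist⟩ := ENNReal.exists_coe_eq_iSup_ofReal_of_le hΦ
  exact ⟨interleaved ε hΦ, hδ ▸ (interleaved δ hdist).dOmega_le⟩

/-- Soft stability of level set persistence: if `Φ : X ≃ₜ Y` satisfies
`d (f x) (g (Φ x)) ≤ ε` everywhere, then for any functor `H : Top ⥤ D` (e.g. homology),
the composites `H ∘ L_f` and `H ∘ L_g` are `Ω_ε`-interleaved for the closed-thickening
family, and `d_Ω(H∘L_f, H∘L_g) ≤ sup_x d (f x) (g (Φ x))`. -/
theorem level_persistence_soft_stability {M : Type} [MetricSpace M] {X Y : Type}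
    [TopologicalSpace X] [TopologicalSpace Y] (f : X → M) (g : Y → M)
    (hf : Continuous f) (hg : Continuous g)
    {D : Type u₂} [Category.{v₂} D] (H : TopCat ⥤ D)
    (ε : ℝ≥0) (Φ : X ≃ₜ Y) (hΦ : ∀ x : X, dist (f x) (g (Φ x)) ≤ ε) :
    OmegaInterleaved (thickeningFamily M) ε (levelFiltration f ⋙ H) (levelFiltration g ⋙ H) ∧
    dOmega (thickeningFamily M) (levelFiltration f ⋙ H) (levelFiltration g ⋙ H) ≤
      ⨆ x : X, ENNReal.ofReal (dist (f x) (g (Φ x))) :=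
  level_persistence_soft_stability_general f g H ε Φ hΦ
end
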